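/- Let G be a finite connected weighted graph with positive edge weights, total weight W, and let π be the stationary distribution π_u = (Σ_{v: uv∈E} w_{uv})/(2W). For any nonempty M ⊆ V, the average hitting time of the weighted random walk satisfies H_{π,M} = 2W·R_{π,M}, where R_{π,M} is the effective resistance from π to M. -/

import Mathlib

/-!
The potential flow `P u v = w_{uv} (H u - H v) / 2W` is a flow from `π` to `M`: the first-step
recurrence for `H` says exactly that its net outflow at `u ∉ M` is `deg u / 2W = π u`.
By Thomson's principle it has least energy among such flows: any other one differs from it by a
flow without sources off `M`, which is orthogonal to every gradient of a potential vanishing on `M`.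
Summation by parts turns the energy `½ Σ P_e² / w_e` of a potential flow into `Σ_u φ u σ u`, which
for `φ = H / 2W` and `σ = π` is `Σ_u π u H u / 2W`.
-/

noncomputable section

variable {V : Type*} [Fintype V]

/-- A flow from `σ` to `M`: antisymmetric, supported on edges, with net outflow
`σ u` at every unmarked vertex. -/
def IsFlow (wt : V → V → ℝ) (σ : V → ℝ) (M : Set V) (p : V → V → ℝ) : Prop :=
  (∀ u v, p v u = -p u v) ∧ (∀ u v, p u v ≠ 0 → 0 < wt u v) ∧
    (∀ u ∉ M, ∑ v, p u v = σ u)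

/-- The energy `Σ_e p_e²/w_e` of a flow (each undirected edge counted once). -/
def flowEnergy (wt p : V → V → ℝ) : ℝ :=
  (1 / 2) * ∑ u, ∑ v, (p u v) ^ 2 / wt u v

/-- The effective resistance `R_{σ,M}`. -/
def effRes (wt : V → V → ℝ) (σ : V → ℝ) (M : Set V) : ℝ :=
  sInf {x | ∃ p, IsFlow wt σ M p ∧ x = flowEnergy wt p}

def potentialFlow {α : Type*} (wt : α → α → ℝ) (φ : α → ℝ) (u v : α) : ℝ :=
  wt u v * (φ u - φ v)

section Flows

variable {wt : V → V → ℝ} {σ : V → ℝ} {M : Set V} {p q : V → V → ℝ} {φ : V → ℝ}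

theorem sum_sum_sub_mul_of_antisymm (hp : ∀ u v, p v u = -p u v) :
    ∑ u, ∑ v, (φ u - φ v) * p u v = 2 * ∑ u, φ u * ∑ v, p u v := by
  have hswap : ∑ u, ∑ v, φ v * p u v = -∑ u, ∑ v, φ u * p u v := by
    rw [Finset.sum_comm, ← Finset.sum_neg_distrib]
    refine Finset.sum_congr rfl fun v _ => ?_
    rw [← Finset.sum_neg_distrib]
    refine Finset.sum_congr rfl fun u _ => ?_
    rw [hp v u, mul_neg]
  simp only [sub_mul, Finset.sum_sub_distrib, hswap, sub_neg_eq_add, ← two_mul, Finset.mul_sum]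

theorem IsFlow.sum_mul_netOutflow (hp : IsFlow wt σ M p) (hφ : ∀ u ∈ M, φ u = 0) :
    ∑ u, φ u * ∑ v, p u v = ∑ u, φ u * σ u := by
  refine Finset.sum_congr rfl fun u _ => ?_
  by_cases hu : u ∈ M
  · simp [hφ u hu]
  · rw [hp.2.2 u hu]

theorem IsFlow.sum_sum_sub_mul (hp : IsFlow wt σ M p) (hφ : ∀ u ∈ M, φ u = 0) :
    ∑ u, ∑ v, (φ u - φ v) * p u v = 2 * ∑ u, φ u * σ u := by
  rw [sum_sum_sub_mul_of_antisymm hp.1, hp.sum_mul_netOutflow hφ]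

theorem IsFlow.eq_zero_of_nonpos (hp : IsFlow wt σ M p) {u v : V} (h : wt u v ≤ 0) :
    p u v = 0 := by
  by_contra hne
  exact h.not_gt (hp.2.1 u v hne)

theorem IsFlow.sub (hp : IsFlow wt σ M p) (hq : IsFlow wt σ M q) :
    IsFlow wt 0 M (p - q) := by
  refine ⟨fun u v => ?_, fun u v hne => ?_, fun u hu => ?_⟩
  · simp only [Pi.sub_apply, hp.1 u v, hq.1 u v]
    ring
  · by_contra hwt
    apply hne
    simp [hp.eq_zero_of_nonpos (not_lt.mp hwt), hq.eq_zero_of_nonpos (not_lt.mp hwt)]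
  · simp [Finset.sum_sub_distrib, hp.2.2 u hu, hq.2.2 u hu]

theorem IsFlow.div_const (hp : IsFlow wt σ M p) (c : ℝ) :
    IsFlow wt (fun u => σ u / c) M (fun u v => p u v / c) := by
  refine ⟨fun u v => ?_, fun u v hne => ?_, fun u hu => ?_⟩
  · show p v u / c = -(p u v / c)
    rw [hp.1 u v, neg_div]
  · exact hp.2.1 u v (left_ne_zero_of_mul hne)
  · rw [← Finset.sum_div, hp.2.2 u hu]

theorem flowEnergy_nonneg (hp : ∀ u v, p u v ≠ 0 → 0 < wt u v) : 0 ≤ flowEnergy wt p := by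
  refine mul_nonneg (by norm_num) (Finset.sum_nonneg fun u _ => Finset.sum_nonneg fun v _ => ?_)
  by_cases h : p u v = 0
  · simp [h]
  · exact div_nonneg (sq_nonneg _) (hp u v h).le

theorem flowEnergy_potentialFlow (wt : V → V → ℝ) (φ : V → ℝ) :
    flowEnergy wt (potentialFlow wt φ) =
      (1 / 2) * ∑ u, ∑ v, (φ u - φ v) * potentialFlow wt φ u v := by
  unfold flowEnergy potentialFlow
  congr 1
  refine Finset.sum_congr rfl fun u _ => Finset.sum_congr rfl fun v _ => ?_
  rcases eq_or_ne (wt u v) 0 with h | h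
  · simp [h]
  · field_simp

/-- Thomson's principle. -/
theorem flowEnergy_potentialFlow_le (hφ : ∀ u ∈ M, φ u = 0)
    (hP : IsFlow wt σ M (potentialFlow wt φ)) (hq : IsFlow wt σ M q) :
    flowEnergy wt (potentialFlow wt φ) ≤ flowEnergy wt q := by
  set P := potentialFlow wt φ
  have hc : IsFlow wt 0 M (q - P) := hq.sub hP
  have hsplit : ∀ u v, q u v ^ 2 / wt u v =
      P u v ^ 2 / wt u v + (q - P) u v ^ 2 / wt u v + 2 * ((φ u - φ v) * (q - P) u v) := by
    intro u v
    rcases le_or_gt (wt u v) 0 with h | h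
    · simp [hq.eq_zero_of_nonpos h, hP.eq_zero_of_nonpos h]
    · simp only [P, potentialFlow, Pi.sub_apply]
      field_simp
      ring
  have hcross : ∑ u, ∑ v, (φ u - φ v) * (q - P) u v = 0 := by
    rw [hc.sum_sum_sub_mul hφ]
    simp
  have henergy : flowEnergy wt q = flowEnergy wt P + flowEnergy wt (q - P) := by
    simp only [flowEnergy, hsplit, Finset.sum_add_distrib, ← Finset.mul_sum, hcross]
    ring
  linarith [flowEnergy_nonneg hc.2.1]

theorem effRes_eq_of_isFlow_potentialFlow (hφ : ∀ u ∈ M, φ u = 0)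
    (hP : IsFlow wt σ M (potentialFlow wt φ)) :
    effRes wt σ M = ∑ u, φ u * σ u := by
  have hleast : IsLeast {x | ∃ p, IsFlow wt σ M p ∧ x = flowEnergy wt p}
      (flowEnergy wt (potentialFlow wt φ)) := by
    refine ⟨⟨_, hP, rfl⟩, ?_⟩
    rintro x ⟨q, hq, rfl⟩
    exact flowEnergy_potentialFlow_le hφ hP hq
  rw [effRes, hleast.csInf_eq, flowEnergy_potentialFlow, hP.sum_sum_sub_mul hφ]
  ring

end Flows

section HittingTimes

variable {wt : V → V → ℝ} {M : Set V} {H : V → ℝ}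

theorem sum_potentialFlow_eq_degree_of_recurrence (hnonneg : ∀ u v, 0 ≤ wt u v) {u : V}
    (hrec : H u = 1 + ∑ v, (wt u v / ∑ z, wt u z) * H v) :
    ∑ v, potentialFlow wt H u v = ∑ v, wt u v := by
  rcases eq_or_ne (∑ z, wt u z) 0 with hdeg | hdeg
  · have hzero : ∀ v, wt u v = 0 := fun v =>
      (Finset.sum_eq_zero_iff_of_nonneg fun z _ => hnonneg u z).mp hdeg v (Finset.mem_univ v)
    simp [potentialFlow, hzero]
  · have hmul : H u * ∑ z, wt u z = ∑ z, wt u z + ∑ v, wt u v * H v := by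
      rw [hrec, add_mul, one_mul, Finset.sum_mul]
      congr 1
      refine Finset.sum_congr rfl fun v _ => ?_
      field_simp
    simp only [potentialFlow, mul_sub, Finset.sum_sub_distrib, ← Finset.sum_mul]
    linarith

theorem isFlow_potentialFlow_of_recurrence (hsymm : ∀ u v, wt u v = wt v u)
    (hnonneg : ∀ u v, 0 ≤ wt u v)
    (hrec : ∀ u ∉ M, H u = 1 + ∑ v, (wt u v / ∑ z, wt u z) * H v) :
    IsFlow wt (fun u => ∑ v, wt u v) M (potentialFlow wt H) := by
  refine ⟨fun u v => ?_, fun u v hne => ?_, fun u hu => ?_⟩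
  · simp only [potentialFlow, hsymm v u]
    ring
  · exact (hnonneg u v).lt_of_ne' (left_ne_zero_of_mul hne)
  · exact sum_potentialFlow_eq_degree_of_recurrence hnonneg (hrec u hu)

end HittingTimes

/-- `H u` is the hitting time of `M` from `u`, determined by its first-step recurrence. -/
theorem average_hitting_time_eq_resistance_general
    (wt : V → V → ℝ)
    (hsymm : ∀ u v, wt u v = wt v u) (hnonneg : ∀ u v, 0 ≤ wt u v)
    (W : ℝ) (hWpos : 0 < W)
    (π : V → ℝ) (hπ : ∀ u, π u = (∑ v, wt u v) / (2 * W))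
    (M : Set V)
    (H : V → ℝ)
    (hHM : ∀ u ∈ M, H u = 0)
    (hHrec : ∀ u ∉ M, H u = 1 + ∑ v, (wt u v / ∑ z, wt u z) * H v) :
    ∑ u, π u * H u = 2 * W * effRes wt π M := by
  have hflow : IsFlow wt π M (potentialFlow wt fun u => H u / (2 * W)) := by
    convert (isFlow_potentialFlow_of_recurrence hsymm hnonneg hHrec).div_const (2 * W) using 1
    · exact funext hπ
    · ext u v
      simp only [potentialFlow]
      ring
  rw [effRes_eq_of_isFlow_potentialFlow (fun u hu => by simp [hHM u hu]) hflow, Finset.mul_sum]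
  refine Finset.sum_congr rfl fun u _ => ?_
  field_simp

/-- For a finite connected weighted graph with stationary distribution `π` and
nonempty `M ⊆ V`, the average hitting time satisfies `H_{π,M} = 2W·R_{π,M}`.
Hitting times are characterized by their standard recurrence: `H u = 0` on `M`
and `H u = 1 + Σ_v (w_{uv}/deg u)·H v` off `M`. -/
theorem average_hitting_time_eq_resistance
    [Nonempty V]
    (wt : V → V → ℝ)
    (hsymm : ∀ u v, wt u v = wt v u) (hnonneg : ∀ u v, 0 ≤ wt u v)
    (hloop : ∀ u, wt u u = 0)
    (hconn : ∀ u v, Relation.ReflTransGen (fun a b => 0 < wt a b) u v)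
    (W : ℝ) (hW : W = (1 / 2) * ∑ u, ∑ v, wt u v) (hWpos : 0 < W)
    (π : V → ℝ) (hπ : ∀ u, π u = (∑ v, wt u v) / (2 * W))
    (M : Set V) (hM : M.Nonempty)
    (H : V → ℝ)
    (hHM : ∀ u ∈ M, H u = 0)
    (hHrec : ∀ u ∉ M, H u = 1 + ∑ v, (wt u v / ∑ z, wt u z) * H v) :
    ∑ u, π u * H u = 2 * W * effRes wt π M :=
  average_hitting_time_eq_resistance_general wt hsymm hnonneg W hWpos π hπ M H hHM hHrec
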